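/- Automatic differentiation of a parameterized quantum circuit (soundness of the code transformation for straight-line unitary programs): let σ₁, …, σ_k be Hermitian involutory n×n complex matrices (σᵢᴴ = σᵢ, σᵢ·σᵢ = 1ₙ), let θ ∈ ℝ^k, let W(θ) := R_{σ_k}(θ_k) · ⋯ · R_{σ_1}(θ_1), and for j ∈ {1,…,k} set A_j := R_{σ_{j−1}}(θ_{j−1}) · ⋯ · R_{σ_1}(θ_1) (with A_1 = 1ₙ) and B_j := R_{σ_k}(θ_k) · ⋯ · R_{σ_{j+1}}(θ_{j+1}) (with B_k = 1ₙ). Then for every n×n complex matrices O and ρ and every j, the j-th partial derivative of the ℂ-valued function θ ↦ trace(O · W(θ) · ρ · (W(θ))ᴴ) at θ equals trace((Z_A ⊗ O) · G_j · (e00 ⊗ ρ) · G_jᴴ), where G_j := (1₂ ⊗ B_j) · R′_{σ_j}(θ_j) · (1₂ ⊗ A_j). -/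

import Mathlib

open Matrix Kronecker Complex

/-- The parameterized rotation gate `R_σ(θ) = cos(θ/2) • 1 − (i·sin(θ/2)) • σ`. -/
noncomputable def Rgate {n : ℕ} (σ : Matrix (Fin n) (Fin n) ℂ) (θ : ℝ) :
    Matrix (Fin n) (Fin n) ℂ :=
  (Real.cos (θ / 2) : ℂ) • (1 : Matrix (Fin n) (Fin n) ℂ)
    - (Complex.I * (Real.sin (θ / 2) : ℂ)) • σ

/-- `|0⟩⟨0|`. -/
def e00 : Matrix (Fin 2) (Fin 2) ℂ := !![1, 0; 0, 0]

/-- `|1⟩⟨1|`. -/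
def e11 : Matrix (Fin 2) (Fin 2) ℂ := !![0, 0; 0, 1]

/-- The Hadamard matrix. -/
noncomputable def Hmat : Matrix (Fin 2) (Fin 2) ℂ :=
  ((1 / Real.sqrt 2 : ℝ) : ℂ) • !![1, 1; 1, -1]

/-- The Pauli-Z ancilla observable. -/
def ZA : Matrix (Fin 2) (Fin 2) ℂ := !![1, 0; 0, -1]

/-- The controlled rotation `C_Rσ(θ) = |0⟩⟨0| ⊗ R_σ(θ) + |1⟩⟨1| ⊗ R_σ(θ+π)`. -/
noncomputable def CR {n : ℕ} (σ : Matrix (Fin n) (Fin n) ℂ) (θ : ℝ) :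
    Matrix (Fin 2 × Fin n) (Fin 2 × Fin n) ℂ :=
  e00 ⊗ₖ Rgate σ θ + e11 ⊗ₖ Rgate σ (θ + Real.pi)

/-- The differentiation gadget `R′_σ(θ) = (H ⊗ 1) C_Rσ(θ) (H ⊗ 1)`. -/
noncomputable def Rgadget {n : ℕ} (σ : Matrix (Fin n) (Fin n) ℂ) (θ : ℝ) :
    Matrix (Fin 2 × Fin n) (Fin 2 × Fin n) ℂ :=
  (Hmat ⊗ₖ (1 : Matrix (Fin n) (Fin n) ℂ)) * CR σ θ
    * (Hmat ⊗ₖ (1 : Matrix (Fin n) (Fin n) ℂ))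

/-!
The rotation gate satisfies the parameter-shift rule `d/dθ R_σ(θ) = ½ R_σ(θ + π)`.
With the circuit written as `B R_σⱼ(t) A`, the product rule therefore gives the derivative
`½ (tr(O M ρ Nᴴ) + tr(O N ρ Mᴴ))`, where `M = B R(θⱼ) A` and `N = B R(θⱼ + π) A`.
Conjugating the controlled rotation by Hadamards yields `G = P₊ ⊗ M + P₋ ⊗ N` with
`P± = (1 ± X)/2`, and the ancilla factors `tr(Z P |0⟩⟨0| Qᴴ)` vanish for `P = Q` and equal `½`
for `P ≠ Q`, so exactly the two cross terms survive.
-/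

theorem List.ofFn_update {α : Type*} {k : ℕ} (f : Fin k → α) (j : Fin k) (a : α) :
    List.ofFn (Function.update f j a) = (List.ofFn f).set j a := by
  refine List.ext_getElem (by simp) fun i _ _ => ?_
  simp only [List.getElem_ofFn, List.getElem_set, Function.update_apply, Fin.ext_iff, eq_comm]

theorem List.prod_reverse_ofFn_update {M : Type*} [Monoid M] {k : ℕ} (f : Fin k → M)
    (j : Fin k) (a : M) :
    (List.ofFn (Function.update f j a)).reverse.prod
      = ((List.ofFn f).drop (j + 1)).reverse.prod * a * ((List.ofFn f).take j).reverse.prod := by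
  rw [List.ofFn_update, List.set_eq_take_append_cons_drop, if_pos (by simp)]
  simp only [List.reverse_append, List.reverse_cons, List.prod_append, List.prod_cons,
    List.prod_nil, mul_one, mul_assoc]

section MatrixCalculus

/- `HasDerivAt` only sees the product topology on matrices; each proof picks, locally, whichever
of Mathlib's (non-canonical) matrix norms inducing it makes the needed calculus lemma apply. -/

variable {ι : Type*} [Fintype ι] {W V : ℝ → Matrix ι ι ℂ} {W' V' : Matrix ι ι ℂ} {x : ℝ}

theorem HasDerivAt.matrix_conjTranspose (hW : HasDerivAt W W' x) :
    HasDerivAt (fun t => (W t)ᴴ) W'ᴴ x := by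
  let := Matrix.normedAddCommGroup (n := ι) (m := ι) (α := ℂ)
  let := Matrix.normedSpace (n := ι) (m := ι) (α := ℂ) (R := ℝ)
  exact hW.star

theorem HasDerivAt.matrix_trace (hW : HasDerivAt W W' x) :
    HasDerivAt (fun t => (W t).trace) W'.trace x := by
  let := Matrix.normedAddCommGroup (n := ι) (m := ι) (α := ℂ)
  let := Matrix.normedSpace (n := ι) (m := ι) (α := ℂ) (R := ℝ)
  exact (Matrix.traceLinearMap ι ℝ ℂ).toContinuousLinearMap.hasFDerivAt.comp_hasDerivAt x hW

variable [DecidableEq ι]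

theorem HasDerivAt.matrix_mul (hW : HasDerivAt W W' x) (hV : HasDerivAt V V' x) :
    HasDerivAt (fun t => W t * V t) (W' * V x + W x * V') x := by
  let := Matrix.linftyOpNormedRing (n := ι) (α := ℂ)
  let := Matrix.linftyOpNormedAlgebra (n := ι) (α := ℂ) (R := ℝ)
  exact hW.mul hV

theorem HasDerivAt.matrix_const_mul_mul_const (hW : HasDerivAt W W' x) (A B : Matrix ι ι ℂ) :
    HasDerivAt (fun t => A * W t * B) (A * W' * B) x := by
  let := Matrix.linftyOpNormedRing (n := ι) (α := ℂ)
  let := Matrix.linftyOpNormedAlgebra (n := ι) (α := ℂ) (R := ℝ)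
  exact (hW.const_mul A).mul_const B

theorem hasDerivAt_trace_mul_mul_conjTranspose (O ρ : Matrix ι ι ℂ) (hW : HasDerivAt W W' x) :
    HasDerivAt (fun t => (O * W t * ρ * (W t)ᴴ).trace)
      ((O * W' * ρ * (W x)ᴴ).trace + (O * W x * ρ * W'ᴴ).trace) x := by
  convert ((hW.matrix_const_mul_mul_const O ρ).matrix_mul hW.matrix_conjTranspose).matrix_trace
    using 1
  rw [Matrix.trace_add]

end MatrixCalculus

theorem Rgate_add_pi {n : ℕ} (σ : Matrix (Fin n) (Fin n) ℂ) (θ : ℝ) :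
    Rgate σ (θ + Real.pi)
      = (-(Real.sin (θ / 2) : ℂ)) • (1 : Matrix (Fin n) (Fin n) ℂ)
        - (I * (Real.cos (θ / 2) : ℂ)) • σ := by
  rw [Rgate, add_div, Real.cos_add_pi_div_two, Real.sin_add_pi_div_two]
  push_cast
  rfl

theorem hasDerivAt_Rgate {n : ℕ} (σ : Matrix (Fin n) (Fin n) ℂ) (θ : ℝ) :
    HasDerivAt (Rgate σ) ((1 / 2 : ℂ) • Rgate σ (θ + Real.pi)) θ := by
  let := Matrix.normedAddCommGroup (n := Fin n) (m := Fin n) (α := ℂ)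
  let := Matrix.normedSpace (n := Fin n) (m := Fin n) (α := ℂ) (R := ℂ)
  have hhalf : HasDerivAt (fun t : ℝ => t / 2) (1 / 2) θ := (hasDerivAt_id θ).div_const 2
  have hcos := ((Real.hasDerivAt_cos (θ / 2)).comp θ hhalf).ofReal_comp
  have hsin := (((Real.hasDerivAt_sin (θ / 2)).comp θ hhalf).ofReal_comp).const_mul I
  refine ((hcos.smul_const (1 : Matrix (Fin n) (Fin n) ℂ)).sub
    (hsin.smul_const σ)).congr_deriv ?_
  rw [Rgate_add_pi, smul_sub, smul_smul, smul_smul]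
  push_cast
  congr 2 <;> ring

theorem ofReal_one_div_sqrt_two_mul_self :
    ((1 / Real.sqrt 2 : ℝ) : ℂ) * ((1 / Real.sqrt 2 : ℝ) : ℂ) = 1 / 2 := by
  rw [← Complex.ofReal_mul, div_mul_div_comm, Real.mul_self_sqrt zero_le_two]
  norm_num

theorem Hmat_mul_e00_mul_Hmat : Hmat * e00 * Hmat = (1 / 2 : ℂ) • !![1, 1; 1, 1] := by
  simp only [Hmat, e00, Matrix.smul_mul, Matrix.mul_smul, smul_smul,
    ofReal_one_div_sqrt_two_mul_self, Matrix.mul_fin_two]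
  norm_num

theorem Hmat_mul_e11_mul_Hmat : Hmat * e11 * Hmat = (1 / 2 : ℂ) • !![1, -1; -1, 1] := by
  simp only [Hmat, e11, Matrix.smul_mul, Matrix.mul_smul, smul_smul,
    ofReal_one_div_sqrt_two_mul_self, Matrix.mul_fin_two]
  norm_num

theorem one_kronecker_mul_kronecker_mul_one_kronecker {a ι : Type*} [Fintype a] [Fintype ι]
    [DecidableEq a] (P : Matrix a a ℂ) (A M B : Matrix ι ι ℂ) :
    ((1 : Matrix a a ℂ) ⊗ₖ B) * (P ⊗ₖ M) * ((1 : Matrix a a ℂ) ⊗ₖ A) = P ⊗ₖ (B * M * A) := by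
  rw [← Matrix.mul_kronecker_mul, ← Matrix.mul_kronecker_mul, Matrix.one_mul, Matrix.mul_one]

theorem Rgadget_eq {n : ℕ} (σ : Matrix (Fin n) (Fin n) ℂ) (θ : ℝ) :
    Rgadget σ θ
      = (Hmat * e00 * Hmat) ⊗ₖ Rgate σ θ + (Hmat * e11 * Hmat) ⊗ₖ Rgate σ (θ + Real.pi) := by
  simp only [Rgadget, CR, Matrix.mul_add, Matrix.add_mul, ← Matrix.mul_kronecker_mul,
    Matrix.one_mul, Matrix.mul_one]

theorem trace_kronecker_conj_add_kronecker {a ι : Type*} [Fintype a] [Fintype ι]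
    (Z E P Q : Matrix a a ℂ) (O ρ M N : Matrix ι ι ℂ) :
    ((Z ⊗ₖ O) * (P ⊗ₖ M + Q ⊗ₖ N) * (E ⊗ₖ ρ) * (P ⊗ₖ M + Q ⊗ₖ N)ᴴ).trace
      = (Z * P * E * Pᴴ).trace * (O * M * ρ * Mᴴ).trace
        + (Z * P * E * Qᴴ).trace * (O * M * ρ * Nᴴ).trace
        + (Z * Q * E * Pᴴ).trace * (O * N * ρ * Mᴴ).trace
        + (Z * Q * E * Qᴴ).trace * (O * N * ρ * Nᴴ).trace := by
  simp only [Matrix.conjTranspose_add, Matrix.conjTranspose_kronecker, Matrix.mul_add,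
    Matrix.add_mul, ← Matrix.mul_kronecker_mul, Matrix.trace_add, Matrix.trace_kronecker]
  ring

theorem trace_ZA_mul_mul_e00_mul_conjTranspose (X Y : Matrix (Fin 2) (Fin 2) ℂ) :
    (ZA * X * e00 * Yᴴ).trace = X 0 0 * star (Y 0 0) - X 1 0 * star (Y 1 0) := by
  simp only [Matrix.trace_fin_two, Matrix.mul_apply, Fin.sum_univ_two,
    Matrix.conjTranspose_apply, ZA, e00, Matrix.of_apply, Matrix.cons_val', Matrix.cons_val_zero,
    Matrix.cons_val_one, Matrix.cons_val_fin_one]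
  ring

theorem trace_ZA_ancilla_readout {ι : Type*} [Fintype ι] (O ρ M N : Matrix ι ι ℂ) :
    ((ZA ⊗ₖ O) * ((Hmat * e00 * Hmat) ⊗ₖ M + (Hmat * e11 * Hmat) ⊗ₖ N) * (e00 ⊗ₖ ρ)
        * ((Hmat * e00 * Hmat) ⊗ₖ M + (Hmat * e11 * Hmat) ⊗ₖ N)ᴴ).trace
      = (1 / 2 : ℂ) * ((O * M * ρ * Nᴴ).trace + (O * N * ρ * Mᴴ).trace) := by
  simp only [trace_kronecker_conj_add_kronecker, trace_ZA_mul_mul_e00_mul_conjTranspose,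
    Hmat_mul_e00_mul_Hmat, Hmat_mul_e11_mul_Hmat]
  simp only [Matrix.smul_apply, Matrix.of_apply, Matrix.cons_val', Matrix.cons_val_zero,
    Matrix.cons_val_one, Matrix.cons_val_fin_one, smul_eq_mul, star_mul', star_neg, star_one,
    star_div₀, star_ofNat]
  ring

theorem circuit_autodiff_sound_general (n k : ℕ)
    (σ : Fin k → Matrix (Fin n) (Fin n) ℂ)
    (θ : Fin k → ℝ) (O ρ : Matrix (Fin n) (Fin n) ℂ) (j : Fin k)
    (W : (Fin k → ℝ) → Matrix (Fin n) (Fin n) ℂ)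
    (hW : ∀ t : Fin k → ℝ, W t = (List.ofFn fun i => Rgate (σ i) (t i)).reverse.prod)
    (A B : Matrix (Fin n) (Fin n) ℂ)
    (hA : A = ((List.ofFn fun i => Rgate (σ i) (θ i)).take (j : ℕ)).reverse.prod)
    (hB : B = ((List.ofFn fun i => Rgate (σ i) (θ i)).drop ((j : ℕ) + 1)).reverse.prod)
    (G : Matrix (Fin 2 × Fin n) (Fin 2 × Fin n) ℂ)
    (hG : G = ((1 : Matrix (Fin 2) (Fin 2) ℂ) ⊗ₖ B) * Rgadget (σ j) (θ j)
        * ((1 : Matrix (Fin 2) (Fin 2) ℂ) ⊗ₖ A)) :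
    deriv (fun t : ℝ =>
        (O * W (Function.update θ j t) * ρ * (W (Function.update θ j t))ᴴ).trace) (θ j)
      = ((ZA ⊗ₖ O) * G * (e00 ⊗ₖ ρ) * Gᴴ).trace := by
  have hsplit (t : ℝ) : W (Function.update θ j t) = B * Rgate (σ j) t * A := by
    rw [hW, hA, hB, ← List.prod_reverse_ofFn_update]
    congr 3
    funext i
    exact Function.apply_update (fun i => Rgate (σ i)) θ j t i
  have hG' : G = (Hmat * e00 * Hmat) ⊗ₖ (B * Rgate (σ j) (θ j) * A)
      + (Hmat * e11 * Hmat) ⊗ₖ (B * Rgate (σ j) (θ j + Real.pi) * A) := by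
    rw [hG, Rgadget_eq, Matrix.mul_add, Matrix.add_mul,
      one_kronecker_mul_kronecker_mul_one_kronecker, one_kronecker_mul_kronecker_mul_one_kronecker]
  simp_rw [hsplit]
  rw [(hasDerivAt_trace_mul_mul_conjTranspose O ρ
    ((hasDerivAt_Rgate (σ j) (θ j)).matrix_const_mul_mul_const B A)).deriv, hG',
    trace_ZA_ancilla_readout]
  simp only [Matrix.smul_mul, Matrix.mul_smul, Matrix.conjTranspose_smul, Matrix.trace_smul,
    smul_eq_mul, star_div₀, star_one, star_ofNat]
  ring

/-- Automatic differentiation of a parameterized quantum circuit: soundness of the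
code transformation for straight-line unitary programs. -/
theorem circuit_autodiff_sound (n k : ℕ)
    (σ : Fin k → Matrix (Fin n) (Fin n) ℂ)
    (hσH : ∀ i, (σ i)ᴴ = σ i) (hσ2 : ∀ i, σ i * σ i = 1)
    (θ : Fin k → ℝ) (O ρ : Matrix (Fin n) (Fin n) ℂ) (j : Fin k)
    (W : (Fin k → ℝ) → Matrix (Fin n) (Fin n) ℂ)
    (hW : ∀ t : Fin k → ℝ, W t = (List.ofFn fun i => Rgate (σ i) (t i)).reverse.prod)
    (A B : Matrix (Fin n) (Fin n) ℂ)
    (hA : A = ((List.ofFn fun i => Rgate (σ i) (θ i)).take (j : ℕ)).reverse.prod)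
    (hB : B = ((List.ofFn fun i => Rgate (σ i) (θ i)).drop ((j : ℕ) + 1)).reverse.prod)
    (G : Matrix (Fin 2 × Fin n) (Fin 2 × Fin n) ℂ)
    (hG : G = ((1 : Matrix (Fin 2) (Fin 2) ℂ) ⊗ₖ B) * Rgadget (σ j) (θ j)
        * ((1 : Matrix (Fin 2) (Fin 2) ℂ) ⊗ₖ A)) :
    deriv (fun t : ℝ =>
        (O * W (Function.update θ j t) * ρ * (W (Function.update θ j t))ᴴ).trace) (θ j)
      = ((ZA ⊗ₖ O) * G * (e00 ⊗ₖ ρ) * Gᴴ).trace :=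
  circuit_autodiff_sound_general n k σ θ O ρ j W hW A B hA hB G hG
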